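/- For every n ≥ 3, the code A_n of Construction 2 is a non-cyclic 2-skew-tolerant binary Gray code of size 2^n − 1 that does not contain the codeword e_{n−1}, and both the first and last transitions of A_n occur in position n. -/

import Mathlib

/-- Codewords `c` and `d` differ exactly at coordinate `i` (1-based), by `±1` there. -/
def TransAt {m : ℕ} (c d : List (ZMod m)) (i : ℕ) : Prop :=
  1 ≤ i ∧ i ≤ c.length ∧ c.length = d.length ∧
  c.take (i-1) = d.take (i-1) ∧ c.drop i = d.drop i ∧
  (d.getD (i-1) 0 = c.getD (i-1) 0 + 1 ∨ d.getD (i-1) 0 = c.getD (i-1) 0 - 1)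

/-- `C` is a cyclic Gray code with transition sequence `δ`. -/
def CyclicGrayWith {m : ℕ} (C : List (List (ZMod m))) (δ : ℕ → ℕ) : Prop :=
  C.Nodup ∧ ∀ i < C.length,
    TransAt (C.getD i []) (C.getD ((i+1) % C.length) []) (δ i)

/-- `C` is a non-cyclic (path) Gray code with transition sequence `δ`. -/
def PathGrayWith {m : ℕ} (C : List (List (ZMod m))) (δ : ℕ → ℕ) : Prop :=
  C.Nodup ∧ ∀ i, i + 1 < C.length →
    TransAt (C.getD i []) (C.getD (i+1) []) (δ i)

/-- cyclic `k`-skew-tolerance. -/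
def SkewCyc (P : ℕ) (δ : ℕ → ℕ) (k : ℤ) : Prop :=
  ∀ i < P, |(δ i : ℤ) - (δ ((i+1) % P) : ℤ)| ≤ k

/-- non-cyclic `k`-skew-tolerance. -/
def SkewPath (P : ℕ) (δ : ℕ → ℕ) (k : ℤ) : Prop :=
  ∀ i, i + 2 < P → |(δ i : ℤ) - (δ (i+1) : ℤ)| ≤ k

/-- the `i`-th standard unit vector (1-based) of length `len` over `ZMod 2`. -/
def unit (len i : ℕ) : List (ZMod 2) :=
  (List.range len).map (fun j => if j + 1 = i then 1 else 0)

/-- pointwise sum of two vectors. -/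
def vadd {m : ℕ} (c d : List (ZMod m)) : List (ZMod m) :=
  List.zipWith (· + ·) c d

/-- `B_{n+1}` from `A_n`: the all-zero word, then `A_n` with `1` appended,
then the reversal of `A_n` minus its first word, with `0` appended. -/
def buildB (An : List (List (ZMod 2))) (len : ℕ) : List (List (ZMod 2)) :=
  List.replicate len (0 : ZMod 2) ::
    (An.map (· ++ [1]) ++ An.tail.reverse.map (· ++ [0]))

/-- Construction 2, codes `A_n` (`n ≥ 3`). -/
def c2A : ℕ → List (List (ZMod 2))
  | 0 => [] | 1 => [] | 2 => []
  | 3 => [[0,0,0],[0,0,1],[0,1,1],[1,1,1],[1,1,0],[1,0,0],[1,0,1]]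
  | (n+4) => (buildB (c2A (n+3)) (n+4)).dropLast ++
      [unit (n+4) (n+2), vadd (unit (n+4) (n+2)) (unit (n+4) (n+4))]

/-- Construction 2, codes `B_n` (`n ≥ 4`). -/
def c2B (n : ℕ) : List (List (ZMod 2)) := buildB (c2A (n-1)) n

/-- Construction 2, codes `C_n` (`n ≥ 4`). -/
def c2C (n : ℕ) : List (List (ZMod 2)) :=
  List.replicate n (0 : ZMod 2) :: unit n (n-2) ::
    vadd (unit n (n-2)) (unit n n) :: (c2B n).tail


/-!
`A_{n+1}` is `0`, then `A_n` with `1` appended, then `A_n` minus its first two words reversed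
with `0` appended, then `e_{n-1}` and `e_{n-1} + e_{n+1}`. So if `τ` is the transition sequence
of `A_n`, that of `A_{n+1}` is `n+1, τ, n+1, (τ minus its first two entries) reversed, n, n+1`.
The induction carries two extra facts: `A_n` starts with `0, e_n, e_{n-1} + e_n`, which makes
every junction a single bit flip, and `τ` starts with `n, n-1, n-2` and ends with `n`, which keeps
neighbouring transitions within distance `2` across the junctions. For distinctness, sort the
words of `A_{n+1}` by their last bit: dropping it, those ending in `1` are `A_n, e_{n-1}` and those
ending in `0` are `0`, `A_n` minus its first two words, and `e_{n-1}`; both lists are duplicate-free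
because `e_{n-1} ∉ A_n`.
-/

namespace TransAt

variable {m : ℕ} {c d : List (ZMod m)} {i : ℕ}

theorem symm (h : TransAt c d i) : TransAt d c i := by
  obtain ⟨h1, h2, hlen, htake, hdrop, hflip⟩ := h
  refine ⟨h1, hlen ▸ h2, hlen.symm, htake.symm, hdrop.symm, ?_⟩
  rcases hflip with h | h <;> rw [h]
  · exact Or.inr (add_sub_cancel_right _ _).symm
  · exact Or.inl (sub_add_cancel _ _).symm

theorem append_right (v : List (ZMod m)) (h : TransAt c d i) : TransAt (c ++ v) (d ++ v) i := by
  obtain ⟨h1, h2, hlen, htake, hdrop, hflip⟩ := h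
  refine ⟨h1, h2.trans (by simp), by simp [hlen], ?_, ?_, ?_⟩
  · rwa [List.take_append_of_le_length (by omega), List.take_append_of_le_length (by omega)]
  · rw [List.drop_append_of_le_length h2, List.drop_append_of_le_length (hlen ▸ h2), hdrop]
  · rwa [List.getD_append _ _ _ _ (by omega), List.getD_append _ _ _ _ (by omega)]

end TransAt

theorem transAt_append_singleton {m : ℕ} (c : List (ZMod m)) (a : ZMod m) :
    TransAt (c ++ [a]) (c ++ [a + 1]) (c.length + 1) :=
  ⟨by omega, by simp, by simp, by simp, by simp, Or.inl (by simp)⟩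

inductive TransSeq {m : ℕ} : List (List (ZMod m)) → List ℕ → Prop
  | singleton (c : List (ZMod m)) : TransSeq [c] []
  | cons {c d : List (ZMod m)} {C : List (List (ZMod m))} {k : ℕ} {τ : List ℕ} :
      TransAt c d k → TransSeq (d :: C) τ → TransSeq (c :: d :: C) (k :: τ)

namespace TransSeq

variable {m : ℕ} {C D : List (List (ZMod m))} {τ σ : List ℕ}

theorem length_add_one (h : TransSeq C τ) : τ.length + 1 = C.length := by
  induction h with
  | singleton => rfl
  | cons _ _ ih => simp [ih]

theorem transAt_getD (h : TransSeq C τ) :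
    ∀ i, i + 1 < C.length → TransAt (C.getD i []) (C.getD (i + 1) []) (τ.getD i 0) := by
  induction h with
  | singleton => simp
  | cons hk _ ih =>
    rintro (_ | i) hi
    · exact hk
    · exact ih i (by simpa using hi)

theorem pathGrayWith (h : TransSeq C τ) (hC : C.Nodup) : PathGrayWith C (τ.getD · 0) :=
  ⟨hC, h.transAt_getD⟩

theorem append {c d : List (ZMod m)} {k : ℕ} (hC : TransSeq C τ) (hD : TransSeq D σ)
    (hc : C.getLast? = some c) (hd : D.head? = some d) (hk : TransAt c d k) :
    TransSeq (C ++ D) (τ ++ k :: σ) := by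
  obtain ⟨D, rfl⟩ : ∃ D', D = d :: D' := by
    cases D with
    | nil => simp at hd
    | cons d' D' => exact ⟨D', by simp_all⟩
  induction hC with
  | singleton c' =>
    obtain rfl : c' = c := by simpa using hc
    exact .cons hk hD
  | cons hk' _ ih => exact .cons hk' (ih (by simpa using hc))

theorem tail (h : TransSeq C τ) (hC : 2 ≤ C.length) : TransSeq C.tail τ.tail := by
  cases h with
  | singleton => simp at hC
  | cons _ h => exact h

theorem reverse (h : TransSeq C τ) : TransSeq C.reverse τ.reverse := by
  induction h with
  | singleton c => exact .singleton c
  | cons hk _ ih =>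
    simpa using ih.append (.singleton _) (by simp) rfl hk.symm

theorem map_append (v : List (ZMod m)) (h : TransSeq C τ) : TransSeq (C.map (· ++ v)) τ := by
  induction h with
  | singleton c => exact .singleton _
  | cons hk _ ih => exact .cons (hk.append_right v) ih

end TransSeq

theorem skewPath_of_isChain {τ : List ℕ} {k : ℤ}
    (h : τ.IsChain fun a b : ℕ => |(a : ℤ) - b| ≤ k) :
    SkewPath (τ.length + 1) (τ.getD · 0) k := by
  intro i hi
  have hi' : i + 1 < τ.length := by omega
  dsimp only
  rw [List.getD_eq_getElem _ _ (by omega), List.getD_eq_getElem _ _ hi']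
  exact List.isChain_iff_getElem.mp h i hi'

theorem transAt_append_singleton_of_ne (c : List (ZMod 2)) {a b : ZMod 2} (hab : a ≠ b) :
    TransAt (c ++ [a]) (c ++ [b]) (c.length + 1) := by
  obtain rfl : b = a + 1 := by revert a b; decide
  exact transAt_append_singleton c a

section UnitVectors

variable {n i : ℕ}

theorem unit_length (n i : ℕ) : (unit n i).length = n := by simp [unit]

theorem unit_succ (n i : ℕ) : unit (n + 1) i = unit n i ++ [if n + 1 = i then 1 else 0] := by
  simp [unit, List.range_succ]

theorem unit_succ_of_ne (h : n + 1 ≠ i) : unit (n + 1) i = unit n i ++ [0] := by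
  rw [unit_succ, if_neg h]

theorem unit_of_lt (h : n < i) : unit n i = List.replicate n 0 := by
  rw [List.eq_replicate_iff]
  refine ⟨unit_length n i, fun y hy => ?_⟩
  obtain ⟨j, hj, rfl⟩ := List.mem_map.mp hy
  rw [if_neg (by simp at hj; omega)]

theorem unit_succ_self (n : ℕ) : unit (n + 1) (n + 1) = List.replicate n 0 ++ [1] := by
  rw [unit_succ, if_pos rfl, unit_of_lt (Nat.lt_succ_self n)]

theorem vadd_append {m : ℕ} {c d u v : List (ZMod m)} (h : c.length = d.length) :
    vadd (c ++ u) (d ++ v) = vadd c d ++ vadd u v :=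
  List.zipWith_append h

theorem vadd_replicate_zero {m : ℕ} (c : List (ZMod m)) :
    vadd c (List.replicate c.length 0) = c := by
  induction c with
  | nil => rfl
  | cons a c ih => simpa [vadd, List.replicate_succ] using ih

theorem vadd_unit_succ_self (h : n + 1 ≠ i) :
    vadd (unit (n + 1) i) (unit (n + 1) (n + 1)) = unit n i ++ [1] := by
  have hz := vadd_replicate_zero (unit n i)
  rw [unit_length] at hz
  rw [unit_succ_of_ne h, unit_succ_self, vadd_append (by simp [unit_length]), hz]
  rfl

theorem transAt_unit_vadd_unit_succ_self (h : n + 1 ≠ i) :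
    TransAt (unit (n + 1) i) (vadd (unit (n + 1) i) (unit (n + 1) (n + 1))) (n + 1) := by
  rw [vadd_unit_succ_self h, unit_succ_of_ne h]
  simpa [unit_length] using transAt_append_singleton_of_ne (unit n i) zero_ne_one

end UnitVectors

/-- The transition sequence of `c2A n`. -/
def c2Trans : ℕ → List ℕ
  | 0 => [] | 1 => [] | 2 => []
  | 3 => [3, 2, 1, 3, 2, 3]
  | n + 4 => (n + 4) :: c2Trans (n + 3) ++ (n + 4) :: (c2Trans (n + 3)).tail.tail.reverse ++
      [n + 3, n + 4]

section TransitionSequence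

variable {n : ℕ}

theorem c2Trans_succ (hn : 3 ≤ n) :
    c2Trans (n + 1) =
      (n + 1) :: c2Trans n ++ (n + 1) :: (c2Trans n).tail.tail.reverse ++ [n, n + 1] := by
  obtain ⟨k, rfl⟩ : ∃ k, n = k + 3 := ⟨n - 3, by omega⟩
  rfl

theorem c2Trans_eq_cons (hn : 3 ≤ n) :
    ∃ ρ, c2Trans n = n :: (n - 1) :: (n - 2) :: (ρ ++ [n]) := by
  induction n, hn using Nat.le_induction with
  | base => exact ⟨[3, 2], rfl⟩
  | succ n hn ih =>
    obtain ⟨ρ, hρ⟩ := ih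
    refine ⟨(n - 2) :: ρ ++ [n, n + 1, n] ++ ρ.reverse ++ [n - 2, n], ?_⟩
    rw [c2Trans_succ hn, hρ]
    simp only [List.tail_cons, List.reverse_cons, List.reverse_append]
    obtain ⟨k, rfl⟩ : ∃ k, n = k + 2 := ⟨n - 2, by omega⟩
    simp

theorem isChain_c2Trans (hn : 3 ≤ n) :
    (c2Trans n).IsChain fun a b : ℕ => |(a : ℤ) - b| ≤ 2 := by
  induction n, hn using Nat.le_induction with
  | base => decide
  | succ n hn ih =>
    obtain ⟨ρ, hρ⟩ := c2Trans_eq_cons hn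
    rw [c2Trans_succ hn, hρ]
    rw [hρ] at ih
    have hT := ih.tail.tail
    simp only [List.tail_cons] at hT ⊢
    have hTr : ((n - 2) :: (ρ ++ [n])).reverse.IsChain fun a b : ℕ => |(a : ℤ) - b| ≤ 2 :=
      List.isChain_reverse.mpr (hT.imp fun a b h => by rwa [abs_sub_comm])
    refine (((ih.cons ?_).append (hTr.cons ?_) ?_).append ?_ ?_) <;>
      simp [abs_le, List.getLast?_cons] <;> omega

end TransitionSequence

theorem mem_map_append_singleton {α : Type*} {L : List (List α)} {y : List α} {a b : α} :
    y ++ [a] ∈ L.map (· ++ [b]) ↔ y ∈ L ∧ a = b := by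
  simp only [List.mem_map]
  constructor
  · rintro ⟨x, hx, hxy⟩
    obtain ⟨rfl, hab⟩ := List.append_inj' hxy rfl
    exact ⟨hx, by simpa using hab.symm⟩
  · rintro ⟨hy, rfl⟩
    exact ⟨y, hy, rfl⟩

theorem nodup_map_append_singleton_append {α : Type*} {L₀ L₁ : List (List α)} {a b : α}
    (hab : a ≠ b) (h₀ : L₀.Nodup) (h₁ : L₁.Nodup) :
    (L₀.map (· ++ [a]) ++ L₁.map (· ++ [b])).Nodup := by
  refine List.nodup_append.mpr ⟨h₀.map (List.append_left_injective _),
    h₁.map (List.append_left_injective _), ?_⟩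
  rintro _ hx y hy rfl
  obtain ⟨x, -, rfl⟩ := List.mem_map.mp hx
  exact hab (mem_map_append_singleton.mp hy).2

theorem buildB_dropLast {A : List (List (ZMod 2))} (len : ℕ) (h : 2 ≤ A.length) :
    (buildB A len).dropLast =
      List.replicate len 0 :: (A.map (· ++ [1]) ++ A.tail.tail.reverse.map (· ++ [0])) := by
  obtain ⟨x₀, x₁, B, rfl⟩ : ∃ x₀ x₁ B, A = x₀ :: x₁ :: B := by
    match A, h with
    | x₀ :: x₁ :: B, _ => exact ⟨x₀, x₁, B, rfl⟩
  simp [buildB, List.dropLast_cons_of_ne_nil, List.dropLast_append_of_ne_nil]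

/-- The passage from `A_n` to `A_{n+1}`, with the `dropLast` of Construction 2 carried out. -/
def c2Step (n : ℕ) (A : List (List (ZMod 2))) : List (List (ZMod 2)) :=
  List.replicate (n + 1) 0 :: (A.map (· ++ [1]) ++ (A.tail.tail.reverse.map (· ++ [0]) ++
    [unit (n + 1) (n - 1), vadd (unit (n + 1) (n - 1)) (unit (n + 1) (n + 1))]))

theorem c2A_succ {n : ℕ} (hn : 3 ≤ n) (h : 2 ≤ (c2A n).length) :
    c2A (n + 1) = c2Step n (c2A n) := by
  obtain ⟨k, rfl⟩ : ∃ k, n = k + 3 := ⟨n - 3, by omega⟩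
  rw [show k + 3 + 1 = k + 4 from rfl, c2A, buildB_dropLast _ h]
  simp [c2Step]

section Step

variable {n : ℕ} {A B : List (List (ZMod 2))}

theorem c2Step_perm (n : ℕ) (A : List (List (ZMod 2))) :
    (c2Step n A).Perm
      ((List.replicate n 0 :: (A.tail.tail.reverse ++ [unit n (n - 1)])).map (· ++ [0]) ++
        (A ++ [unit n (n - 1)]).map (· ++ [1])) := by
  rw [c2Step, vadd_unit_succ_self (by omega), unit_succ_of_ne (by omega), List.replicate_succ']
  refine List.perm_iff_count.mpr fun x => ?_
  simp only [List.map_cons, List.map_append, List.count_cons, List.count_append, List.map_nil,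
    List.count_nil]
  omega

theorem length_c2Step (h : 2 ≤ A.length) : (c2Step n A).length = 2 * A.length + 1 := by
  simp [c2Step]
  omega

theorem length_of_mem_c2Step (hA : ∀ c ∈ A, c.length = n) :
    ∀ c ∈ c2Step n A, c.length = n + 1 := by
  intro c hc
  simp only [c2Step, List.mem_cons, List.mem_append, List.mem_map, List.mem_reverse,
    List.not_mem_nil, or_false] at hc
  rcases hc with rfl | ⟨y, hy, rfl⟩ | ⟨y, hy, rfl⟩ | rfl | rfl
  · exact List.length_replicate
  · simp [hA y hy]
  · simp [hA y (List.mem_of_mem_tail (List.mem_of_mem_tail hy))]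
  · exact unit_length _ _
  · simp [vadd, unit_length]

variable {x₁ : List (ZMod 2)}

theorem nodup_c2Step (hA : (List.replicate n 0 :: x₁ :: B).Nodup)
    (he : unit n (n - 1) ∉ List.replicate n 0 :: x₁ :: B) :
    (c2Step n (List.replicate n 0 :: x₁ :: B)).Nodup := by
  refine (c2Step_perm n _).nodup_iff.mpr (nodup_map_append_singleton_append zero_ne_one ?_ ?_)
  · simp only [List.nodup_cons, List.mem_cons, not_or] at hA he
    refine List.nodup_cons.mpr ⟨?_, (List.nodup_reverse.mpr hA.2.2).append
      (List.nodup_singleton _) (List.disjoint_singleton.mpr (by simpa using he.2.2))⟩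
    simpa [Ne.symm he.1] using hA.1.2
  · exact hA.append (List.nodup_singleton _) (List.disjoint_singleton.mpr he)

theorem unit_not_mem_c2Step (hA : (List.replicate n 0 :: unit n n :: B).Nodup)
    (he : unit n (n - 1) ∉ List.replicate n 0 :: unit n n :: B) :
    unit (n + 1) n ∉ c2Step n (List.replicate n 0 :: unit n n :: B) := by
  rw [(c2Step_perm n _).mem_iff, unit_succ_of_ne (by omega), List.mem_append,
    mem_map_append_singleton, mem_map_append_singleton]
  simp only [List.nodup_cons, List.mem_cons, not_or] at hA he
  simp [hA, Ne.symm he.2.1, Ne.symm hA.1.1]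

theorem c2Step_eq_cons (n : ℕ) (B : List (List (ZMod 2))) :
    ∃ R, c2Step n (List.replicate n 0 :: unit n n :: B) = List.replicate (n + 1) 0 ::
      unit (n + 1) (n + 1) :: vadd (unit (n + 1) (n + 1 - 1)) (unit (n + 1) (n + 1)) :: R := by
  rw [c2Step, Nat.add_sub_cancel, vadd_unit_succ_self (i := n) (by omega), unit_succ_self]
  exact ⟨_, rfl⟩

theorem transSeq_c2Step {R : List (List (ZMod 2))} {τ : List ℕ} (hn : 1 ≤ n)
    (hA : A = List.replicate n 0 :: x₁ :: vadd (unit n (n - 1)) (unit n n) :: R)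
    (hlen : ∀ c ∈ A, c.length = n) (hτ : TransSeq A τ) :
    TransSeq (c2Step n A) ((n + 1) :: τ ++ (n + 1) :: τ.tail.tail.reverse ++ [n, n + 1]) := by
  have hB : TransSeq A.tail.tail τ.tail.tail := (hτ.tail (by simp [hA])).tail (by simp [hA])
  obtain ⟨y, hy⟩ : ∃ y, A.tail.tail.getLast? = some y :=
    ⟨_, by rw [hA]; exact List.getLast?_cons⟩
  have hy' : A.getLast? = some y := by rw [← hy, hA]; rfl
  have hyA : y ∈ A := List.mem_of_getLast? hy'
  have hu := transAt_unit_vadd_unit_succ_self (n := n) (i := n - 1) (by omega)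
  have hx₂ : TransAt (vadd (unit n (n - 1)) (unit n n) ++ [0]) (unit (n + 1) (n - 1)) n := by
    obtain ⟨m, rfl⟩ : ∃ m, n = m + 1 := ⟨n - 1, by omega⟩
    rw [Nat.add_sub_cancel, unit_succ_of_ne (n := m + 1) (i := m) (by omega)]
    exact (transAt_unit_vadd_unit_succ_self (n := m) (i := m) (by omega)).symm.append_right [0]
  have hlast := (hB.reverse.map_append [0]).append (.cons hu (.singleton _))
    (by simp [hA]) rfl hx₂
  have hmid := (hτ.map_append [1]).append hlast (by rw [List.getLast?_map, hy']; rfl)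
    (by rw [List.head?_append, List.head?_map, List.head?_reverse, hy]; rfl)
    (transAt_append_singleton_of_ne y one_ne_zero)
  have hfirst :
      TransAt (List.replicate (n + 1) (0 : ZMod 2)) (List.replicate n 0 ++ [1]) (n + 1) := by
    simpa [List.replicate_succ'] using
      transAt_append_singleton_of_ne (List.replicate n (0 : ZMod 2)) zero_ne_one
  have hall := (TransSeq.singleton (List.replicate (n + 1) (0 : ZMod 2))).append hmid rfl
    (by simp [hA]) hfirst
  rw [hlen y hyA] at hall
  convert hall using 1 <;> simp [c2Step]

end Step

structure C2Invariant (n : ℕ) : Prop where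
  length_of_mem : ∀ c ∈ c2A n, c.length = n
  length_eq : (c2A n).length = 2 ^ n - 1
  unit_pred_not_mem : unit n (n - 1) ∉ c2A n
  nodup : (c2A n).Nodup
  eq_cons : ∃ R, c2A n = List.replicate n 0 :: unit n n :: vadd (unit n (n - 1)) (unit n n) :: R
  transSeq : TransSeq (c2A n) (c2Trans n)

theorem c2Invariant_three : C2Invariant 3 where
  length_of_mem := by decide
  length_eq := by decide
  unit_pred_not_mem := by decide
  nodup := by decide
  eq_cons := ⟨_, rfl⟩
  transSeq := by
    repeat refine .cons (by unfold TransAt; decide) ?_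
    exact .singleton _

theorem C2Invariant.succ {n : ℕ} (hn : 3 ≤ n) (h : C2Invariant n) : C2Invariant (n + 1) := by
  obtain ⟨R, hR⟩ := h.eq_cons
  have hnd := h.nodup
  have he := h.unit_pred_not_mem
  rw [hR] at hnd he
  have hstep : c2A (n + 1) = c2Step n (c2A n) := c2A_succ hn (by simp [hR])
  refine ⟨?_, ?_, ?_, ?_, ?_, ?_⟩ <;> rw [hstep]
  · exact length_of_mem_c2Step h.length_of_mem
  · rw [length_c2Step (by simp [hR]), h.length_eq, pow_succ]
    have := Nat.one_le_two_pow (n := n)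
    omega
  · rw [Nat.add_sub_cancel, hR]
    exact unit_not_mem_c2Step hnd he
  · rw [hR]
    exact nodup_c2Step hnd he
  · rw [hR]
    exact c2Step_eq_cons n _
  · rw [c2Trans_succ hn]
    exact transSeq_c2Step (by omega) hR h.length_of_mem h.transSeq

theorem c2Invariant {n : ℕ} (hn : 3 ≤ n) : C2Invariant n :=
  Nat.le_induction c2Invariant_three (fun _ hn h => h.succ hn) n hn

theorem stmt4 : ∀ n : ℕ, 3 ≤ n →
    (∀ c ∈ c2A n, c.length = n) ∧ (c2A n).length = 2 ^ n - 1 ∧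
    unit n (n-1) ∉ c2A n ∧
    ∃ δ : ℕ → ℕ, PathGrayWith (c2A n) δ ∧ SkewPath (c2A n).length δ 2 ∧
      δ 0 = n ∧ δ ((c2A n).length - 2) = n := by
  intro n hn
  have h := c2Invariant hn
  have hlen := h.transSeq.length_add_one
  obtain ⟨ρ, hρ⟩ := c2Trans_eq_cons hn
  refine ⟨h.length_of_mem, h.length_eq, h.unit_pred_not_mem, _, h.transSeq.pathGrayWith h.nodup,
    hlen ▸ skewPath_of_isChain (isChain_c2Trans hn), by simp [hρ], ?_⟩
  rw [← hlen, hρ]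
  simp
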